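/- Let K : ℝ → Matrix (Fin m) (Fin m) ℝ be continuous with ‖K(t)‖₂ ≤ k_max for all t. Let J₁, J₂ solve X'' + KX = 0 with J₁(0) = I, J₁'(0) = 0, J₂(0) = 0, J₂'(0) = I. Then for 0 < τ < √(2/k_max) there exists a constant C depending only on k_max such that ‖J₁(τ) − I‖₂ ≤ C τ² and ‖J₂(τ) − τ·I‖₂ ≤ C τ³. -/

import Mathlib

open Matrix MeasureTheory

noncomputable section

attribute [local instance] Matrix.normedAddCommGroup Matrix.normedSpace

/-- The operator (spectral) norm of a real square matrix. -/
def opNorm {m : ℕ} (M : Matrix (Fin m) (Fin m) ℝ) : ℝ :=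
  ‖Matrix.toEuclideanCLM (𝕜 := ℝ) M‖

/-!
Transported to operators on Euclidean space, where `opNorm` is the norm, the pair `(J, J')`
solves a linear first-order system with growth rate `max 1 k_max`, so Grönwall bounds `‖J‖` and
`‖J'‖` on `[0, τ]` by `e^{max 1 k_max · τ}`, which stays bounded because `τ < √(2 / k_max)`.
Hence `‖J''‖ = ‖K J‖ = O(1)`, and the mean value inequality applied to `J'` and then to
`J - t J'(0)` gives `‖J₁(τ) - 1‖ = O(τ²)`. Since `J₂(0) = 0`, the same inequality first gives
`‖J₂(t)‖ = O(t)`, so `‖J₂''‖ = O(τ)` on `[0, τ]` and the argument gives `O(τ³)`.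
-/

open Set Real

section SecondOrder

variable {E : Type*} [NormedAddCommGroup E] [NormedSpace ℝ E] {F F' F'' : ℝ → E}

theorem max_norm_le_mul_exp_of_norm_deriv_deriv_le {k : ℝ}
    (hF : ∀ t, HasDerivAt F (F' t) t) (hF' : ∀ t, HasDerivAt F' (F'' t) t)
    (hF'' : ∀ t, ‖F'' t‖ ≤ k * ‖F t‖) {t : ℝ} (ht : 0 ≤ t) :
    max ‖F t‖ ‖F' t‖ ≤ max ‖F 0‖ ‖F' 0‖ * exp (max 1 k * t) := by
  have hderiv : ∀ s, HasDerivAt (fun s ↦ (F s, F' s)) (F' s, F'' s) s :=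
    fun s ↦ (hF s).prodMk (hF' s)
  have hgrowth : ∀ s, ‖(F' s, F'' s)‖ ≤ max 1 k * ‖(F s, F' s)‖ + 0 := fun s ↦ by
    rw [Prod.norm_def, Prod.norm_def, add_zero]
    exact max_le
      ((le_max_right _ _).trans (le_mul_of_one_le_left (by positivity) (le_max_left _ _)))
      ((hF'' s).trans
        (mul_le_mul (le_max_right _ _) (le_max_left _ _) (norm_nonneg _) (by positivity)))
  have := norm_le_gronwallBound_of_norm_deriv_right_le (a := 0) (b := t)
    (fun s _ ↦ (hderiv s).continuousAt.continuousWithinAt)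
    (fun s _ ↦ (hderiv s).hasDerivWithinAt) le_rfl (fun s _ ↦ hgrowth s) t ⟨ht, le_rfl⟩
  simpa only [Prod.norm_def, sub_zero, gronwallBound_ε0] using this

theorem norm_sub_le_mul_of_norm_deriv_le {C τ : ℝ} (hτ : 0 ≤ τ)
    (hF : ∀ t ∈ Icc 0 τ, HasDerivAt F (F' t) t) (hC : ∀ t ∈ Icc 0 τ, ‖F' t‖ ≤ C) :
    ‖F τ - F 0‖ ≤ C * τ := by
  simpa using norm_image_sub_le_of_norm_deriv_le_segment'
    (fun t ht ↦ (hF t ht).hasDerivWithinAt) (fun t ht ↦ hC t (Ico_subset_Icc_self ht))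
    τ ⟨hτ, le_rfl⟩

theorem norm_sub_sub_smul_le_of_norm_deriv_deriv_le {M τ : ℝ} (hτ : 0 ≤ τ)
    (hF : ∀ t ∈ Icc 0 τ, HasDerivAt F (F' t) t) (hF' : ∀ t ∈ Icc 0 τ, HasDerivAt F' (F'' t) t)
    (hM : ∀ t ∈ Icc 0 τ, ‖F'' t‖ ≤ M) :
    ‖F τ - F 0 - τ • F' 0‖ ≤ M * τ ^ 2 := by
  have hM0 : 0 ≤ M := (norm_nonneg _).trans (hM 0 ⟨le_rfl, hτ⟩)
  have hF'_sub : ∀ t ∈ Icc 0 τ, ‖F' t - F' 0‖ ≤ M * τ := fun t ht ↦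
    (norm_sub_le_mul_of_norm_deriv_le ht.1 (fun s hs ↦ hF' s ⟨hs.1, hs.2.trans ht.2⟩)
      (fun s hs ↦ hM s ⟨hs.1, hs.2.trans ht.2⟩)).trans (mul_le_mul_of_nonneg_left ht.2 hM0)
  have := norm_sub_le_mul_of_norm_deriv_le (F := fun t ↦ F t - t • F' 0) hτ
    (fun t ht ↦ ((hF t ht).sub ((hasDerivAt_id' t).smul_const (F' 0))).congr_deriv
      (by rw [one_smul])) hF'_sub
  simpa [sq, mul_assoc, sub_right_comm] using this

end SecondOrder

theorem norm_neg_mul_le_of_le {R : Type*} [NonUnitalSeminormedRing R] {a b : R} {k c : ℝ}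
    (ha : ‖a‖ ≤ k) (hb : ‖b‖ ≤ c) (hk : 0 ≤ k) :
    ‖-(a * b)‖ ≤ k * c := by
  rw [norm_neg]
  exact (norm_mul_le _ _).trans (mul_le_mul ha hb (norm_nonneg _) hk)

section Jacobi

variable {A : Type*} [NormedRing A] [NormedSpace ℝ A] {K J J' : ℝ → A} {k τ : ℝ}

theorem max_norm_jacobi_le (hK : ∀ t, ‖K t‖ ≤ k) (hJ : ∀ t, HasDerivAt J (J' t) t)
    (hJ' : ∀ t, HasDerivAt J' (-(K t * J t)) t) {t : ℝ} (ht : t ∈ Icc 0 τ) :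
    max ‖J t‖ ‖J' t‖ ≤ max ‖J 0‖ ‖J' 0‖ * exp (max 1 k * τ) := by
  have hk : 0 ≤ k := (norm_nonneg _).trans (hK 0)
  refine (max_norm_le_mul_exp_of_norm_deriv_deriv_le (k := k) hJ hJ'
    (fun s ↦ norm_neg_mul_le_of_le (hK s) le_rfl hk) ht.1).trans ?_
  gcongr
  exact ht.2

theorem norm_jacobi_sub_le_of_deriv_eq_zero (hK : ∀ t, ‖K t‖ ≤ k)
    (hJ : ∀ t, HasDerivAt J (J' t) t) (hJ' : ∀ t, HasDerivAt J' (-(K t * J t)) t)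
    (hJ'0 : J' 0 = 0) (hτ : 0 ≤ τ) :
    ‖J τ - J 0‖ ≤ k * (‖J 0‖ * exp (max 1 k * τ)) * τ ^ 2 := by
  have hk : 0 ≤ k := (norm_nonneg _).trans (hK 0)
  have := norm_sub_sub_smul_le_of_norm_deriv_deriv_le hτ (fun t _ ↦ hJ t) (fun t _ ↦ hJ' t)
    fun t ht ↦ norm_neg_mul_le_of_le (hK t)
      ((le_max_left _ _).trans (max_norm_jacobi_le hK hJ hJ' ht)) hk
  rwa [hJ'0, norm_zero, max_eq_left (norm_nonneg _), smul_zero, sub_zero] at this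

theorem norm_jacobi_sub_smul_le_of_eq_zero (hK : ∀ t, ‖K t‖ ≤ k)
    (hJ : ∀ t, HasDerivAt J (J' t) t) (hJ' : ∀ t, HasDerivAt J' (-(K t * J t)) t)
    (hJ0 : J 0 = 0) (hτ : 0 ≤ τ) :
    ‖J τ - τ • J' 0‖ ≤ k * (‖J' 0‖ * exp (max 1 k * τ)) * τ ^ 3 := by
  have hk : 0 ≤ k := (norm_nonneg _).trans (hK 0)
  have hJ_max : ∀ t ∈ Icc 0 τ, max ‖J t‖ ‖J' t‖ ≤ ‖J' 0‖ * exp (max 1 k * τ) := fun t ht ↦ by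
    simpa [hJ0] using max_norm_jacobi_le hK hJ hJ' ht
  have hJ_lin : ∀ t ∈ Icc 0 τ, ‖J t‖ ≤ ‖J' 0‖ * exp (max 1 k * τ) * τ := fun t ht ↦
    calc ‖J t‖ = ‖J t - J 0‖ := by rw [hJ0, sub_zero]
      _ ≤ ‖J' 0‖ * exp (max 1 k * τ) * t := norm_sub_le_mul_of_norm_deriv_le ht.1
          (fun s _ ↦ hJ s) fun s hs ↦ (le_max_right _ _).trans (hJ_max s ⟨hs.1, hs.2.trans ht.2⟩)
      _ ≤ ‖J' 0‖ * exp (max 1 k * τ) * τ := mul_le_mul_of_nonneg_left ht.2 (by positivity)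
  have := norm_sub_sub_smul_le_of_norm_deriv_deriv_le hτ (fun t _ ↦ hJ t) (fun t _ ↦ hJ' t)
    fun t ht ↦ norm_neg_mul_le_of_le (hK t) (hJ_lin t ht) hk
  rw [hJ0, sub_zero] at this
  convert this using 1
  ring

end Jacobi

theorem HasDerivAt.toEuclideanCLM {𝕜 n : Type*} [RCLike 𝕜] [Fintype n] [DecidableEq n]
    {J : 𝕜 → Matrix n n 𝕜} {J' : Matrix n n 𝕜} {t : 𝕜} (h : HasDerivAt J J' t) :
    HasDerivAt (fun s ↦ Matrix.toEuclideanCLM (𝕜 := 𝕜) (n := n) (J s))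
      (Matrix.toEuclideanCLM (𝕜 := 𝕜) (n := n) J') t :=
  (LinearMap.toContinuousLinearMap
    (Matrix.toEuclideanCLM (𝕜 := 𝕜) (n := n)).toAlgEquiv.toLinearMap).hasFDerivAt.comp_hasDerivAt
      t h

theorem short_time_estimates_general {m : ℕ} (kmax : ℝ) :
    ∃ C > (0 : ℝ),
      ∀ (K J₁ J₁' J₂ J₂' : ℝ → Matrix (Fin m) (Fin m) ℝ),
        Continuous K →
        (∀ t, opNorm (K t) ≤ kmax) →
        (∀ t, HasDerivAt J₁ (J₁' t) t) →
        (∀ t, HasDerivAt J₁' (-(K t * J₁ t)) t) →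
        (∀ t, HasDerivAt J₂ (J₂' t) t) →
        (∀ t, HasDerivAt J₂' (-(K t * J₂ t)) t) →
        J₁ 0 = 1 → J₁' 0 = 0 → J₂ 0 = 0 → J₂' 0 = 1 →
        ∀ τ : ℝ, 0 < τ → τ < Real.sqrt (2 / kmax) →
          opNorm (J₁ τ - 1) ≤ C * τ ^ 2 ∧
          opNorm (J₂ τ - τ • (1 : Matrix (Fin m) (Fin m) ℝ)) ≤ C * τ ^ 3 := by
  set L := max 1 kmax
  refine ⟨L * exp (L * √(2 / kmax)), by positivity, ?_⟩
  intro K J₁ J₁' J₂ J₂' _ hK hJ₁ hJ₁' hJ₂ hJ₂' hJ₁0 hJ₁'0 hJ₂0 hJ₂'0 τ hτ hτ_lt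
  let Φ := Matrix.toEuclideanCLM (𝕜 := ℝ) (n := Fin m)
  have hΦ_jacobi : ∀ {J J' : ℝ → Matrix (Fin m) (Fin m) ℝ},
      (∀ t, HasDerivAt J' (-(K t * J t)) t) →
      ∀ t, HasDerivAt (fun s ↦ Φ (J' s)) (-(Φ (K t) * Φ (J t))) t := fun h t ↦ by
    simpa only [map_neg, map_mul] using (h t).toEuclideanCLM
  have hΦ_one : ‖Φ 1‖ ≤ 1 := by
    rw [map_one]
    exact ContinuousLinearMap.norm_id_le
  have hconst : ∀ {δ : ℝ}, 0 ≤ δ → δ ≤ 1 →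
      kmax * (δ * exp (L * τ)) ≤ L * exp (L * √(2 / kmax)) := fun hδ0 hδ1 ↦ by
    have hexp : exp (L * τ) ≤ exp (L * √(2 / kmax)) := by gcongr
    exact mul_le_mul (le_max_right _ _) (by nlinarith [exp_pos (L * τ)]) (by positivity)
      (by positivity)
  constructor
  · have := norm_jacobi_sub_le_of_deriv_eq_zero hK (fun t ↦ (hJ₁ t).toEuclideanCLM)
      (hΦ_jacobi hJ₁') (by rw [hJ₁'0, map_zero]) hτ.le
    calc opNorm (J₁ τ - 1) = ‖Φ (J₁ τ) - Φ (J₁ 0)‖ := by rw [hJ₁0, ← map_sub]; rfl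
      _ ≤ _ := this
      _ ≤ L * exp (L * √(2 / kmax)) * τ ^ 2 :=
        mul_le_mul_of_nonneg_right (hconst (norm_nonneg _) (hJ₁0 ▸ hΦ_one)) (by positivity)
  · have := norm_jacobi_sub_smul_le_of_eq_zero hK (fun t ↦ (hJ₂ t).toEuclideanCLM)
      (hΦ_jacobi hJ₂') (by rw [hJ₂0, map_zero]) hτ.le
    calc opNorm (J₂ τ - τ • 1) = ‖Φ (J₂ τ) - τ • Φ (J₂' 0)‖ := by
          rw [hJ₂'0, ← map_smul, ← map_sub]; rfl
      _ ≤ _ := this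
      _ ≤ L * exp (L * √(2 / kmax)) * τ ^ 3 :=
        mul_le_mul_of_nonneg_right (hconst (norm_nonneg _) (hJ₂'0 ▸ hΦ_one)) (by positivity)

/-- Short-time estimates for the fundamental Jacobi fields `J₁, J₂` (with data
`J₁(0)=1, J₁'(0)=0` and `J₂(0)=0, J₂'(0)=1`): for `0 < τ < √(2/k_max)` there is a
constant `C` depending only on `k_max` with `‖J₁(τ)−1‖₂ ≤ Cτ²`, `‖J₂(τ)−τ·1‖₂ ≤ Cτ³`. -/
theorem short_time_estimates {m : ℕ} (kmax : ℝ) (hkmax : 0 < kmax) :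
    ∃ C > (0 : ℝ),
      ∀ (K J₁ J₁' J₂ J₂' : ℝ → Matrix (Fin m) (Fin m) ℝ),
        Continuous K →
        (∀ t, opNorm (K t) ≤ kmax) →
        (∀ t, HasDerivAt J₁ (J₁' t) t) →
        (∀ t, HasDerivAt J₁' (-(K t * J₁ t)) t) →
        (∀ t, HasDerivAt J₂ (J₂' t) t) →
        (∀ t, HasDerivAt J₂' (-(K t * J₂ t)) t) →
        J₁ 0 = 1 → J₁' 0 = 0 → J₂ 0 = 0 → J₂' 0 = 1 →
        ∀ τ : ℝ, 0 < τ → τ < Real.sqrt (2 / kmax) →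
          opNorm (J₁ τ - 1) ≤ C * τ ^ 2 ∧
          opNorm (J₂ τ - τ • (1 : Matrix (Fin m) (Fin m) ℝ)) ≤ C * τ ^ 3 :=
  short_time_estimates_general kmax
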